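/- arXiv:2404.03158 — 2 statements merged into one kernel-verified Lean document; each statement's English description precedes it below -/
import Mathlib

section
/- Let f : (τ, ∞) → ℝ be a uniformly continuous nonnegative function such that ∫_τ^∞ f(t) dt < ∞. Then f(t) → 0 as t → ∞. -/
/-! Uniform continuity gives a window length `c` such that `f t` is within `ε` of its average
over `[t, t + c]` for every `t > τ`; integrability makes these averages tend to `0`, since
`∫ x in t..t + c, f x` is a difference of two partial integrals converging to `∫ x in Ioi τ, f x`. -/

open MeasureTheory Filter Set Topology
open scoped Interval

section

variable {E : Type*} [NormedAddCommGroup E] [NormedSpace ℝ E]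

theorem tendsto_intervalIntegral_add_const_of_integrableOn_Ioi {f : ℝ → E} {τ : ℝ}
    (hf : IntegrableOn f (Ioi τ)) (c : ℝ) :
    Tendsto (fun t => ∫ x in t..t + c, f x) atTop (𝓝 0) := by
  have hlim := intervalIntegral_tendsto_integral_Ioi (b := fun t => t) τ hf tendsto_id
  have hshift := intervalIntegral_tendsto_integral_Ioi (b := fun t => t + c) τ hf
    (tendsto_atTop_add_const_right _ c tendsto_id)
  rw [← sub_self (∫ x in Ioi τ, f x)]
  refine (hshift.sub hlim).congr' ?_
  have hfτ : ∀ b ≥ τ, IntervalIntegrable f volume τ b := fun b hb =>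
    (intervalIntegrable_iff_integrableOn_Ioc_of_le hb).2 (hf.mono_set Ioc_subset_Ioi_self)
  filter_upwards [eventually_ge_atTop τ, eventually_ge_atTop (τ - c)] with t ht htc
  exact intervalIntegral.integral_interval_sub_left (hfτ _ (by linarith)) (hfτ t ht)

theorem UniformContinuousOn.exists_norm_sub_average_le [CompleteSpace E] {f : ℝ → E} {τ : ℝ}
    (hf : UniformContinuousOn f (Ioi τ)) {ε : ℝ} (hε : 0 < ε) :
    ∃ c > 0, ∀ t > τ, ‖f t - c⁻¹ • ∫ x in t..t + c, f x‖ ≤ ε := by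
  obtain ⟨δ, hδ, hfδ⟩ := Metric.uniformContinuousOn_iff.1 hf ε hε
  refine ⟨δ / 2, by positivity, fun t ht => ?_⟩
  have hwindow : Icc t (t + δ / 2) ⊆ Ioi τ := fun x hx => ht.trans_le hx.1
  have hint : IntervalIntegrable f volume t (t + δ / 2) :=
    (hf.continuousOn.mono hwindow).intervalIntegrable_of_Icc (by linarith)
  have hclose : ∀ x ∈ Ι t (t + δ / 2), ‖f t - f x‖ ≤ ε := by
    intro x hx
    rw [uIoc_of_le (by linarith)] at hx
    rw [← dist_eq_norm, dist_comm]
    refine (hfδ x (hwindow (Ioc_subset_Icc_self hx)) t ht ?_).le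
    rw [Real.dist_eq, abs_of_nonneg (by linarith [hx.1])]
    linarith [hx.2]
  have hδ2 : (δ / 2)⁻¹ * |t + δ / 2 - t| = 1 := by
    rw [add_sub_cancel_left, abs_of_pos (by positivity), inv_mul_cancel₀ (by positivity)]
  calc ‖f t - (δ / 2)⁻¹ • ∫ x in t..t + δ / 2, f x‖
      = ‖(δ / 2)⁻¹ • ∫ x in t..t + δ / 2, (f t - f x)‖ := by
        rw [intervalIntegral.integral_sub intervalIntegrable_const hint,
          intervalIntegral.integral_const, add_sub_cancel_left, smul_sub, smul_smul,
          inv_mul_cancel₀ (by positivity), one_smul]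
    _ ≤ (δ / 2)⁻¹ * (ε * |t + δ / 2 - t|) := by
        rw [norm_smul, Real.norm_of_nonneg (by positivity)]
        gcongr
        exact intervalIntegral.norm_integral_le_of_norm_le_const hclose
    _ = ε := by rw [mul_left_comm, hδ2, mul_one]

end

theorem stmt_5_general (τ : ℝ) (f : ℝ → ℝ)
    (huc : UniformContinuousOn f (Set.Ioi τ))
    (hint : IntegrableOn f (Set.Ioi τ) volume) :
    Tendsto f atTop (nhds 0) := by
  refine Metric.tendsto_nhds.2 fun ε hε => ?_
  obtain ⟨c, -, hc⟩ := huc.exists_norm_sub_average_le (half_pos hε)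
  have haverage : Tendsto (fun t => c⁻¹ • ∫ x in t..t + c, f x) atTop (𝓝 0) := by
    simpa using (tendsto_intervalIntegral_add_const_of_integrableOn_Ioi hint c).const_smul c⁻¹
  filter_upwards [eventually_gt_atTop τ, Metric.tendsto_nhds.1 haverage _ (half_pos hε)]
    with t ht hsmall
  rw [dist_zero_right] at hsmall ⊢
  calc ‖f t‖ ≤ ‖f t - c⁻¹ • ∫ x in t..t + c, f x‖ + ‖c⁻¹ • ∫ x in t..t + c, f x‖ :=
        norm_le_norm_sub_add _ _
    _ < ε / 2 + ε / 2 := add_lt_add_of_le_of_lt (hc t ht) hsmall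
    _ = ε := add_halves ε

theorem stmt_5 (τ : ℝ) (f : ℝ → ℝ)
    (huc : UniformContinuousOn f (Set.Ioi τ))
    (hnn : ∀ t ∈ Set.Ioi τ, 0 ≤ f t)
    (hint : IntegrableOn f (Set.Ioi τ) volume) :
    Tendsto f atTop (nhds 0) :=
  stmt_5_general τ f huc hint
end

section
/- Let μ, ν, λ > 0, let Ω ⊂ ℝ^N be a bounded smooth domain, let u, v, w ∈ C²(Ω̄) with w > 0 on Ω̄, satisfying 0 = Δw - μw + νu + λv in Ω with homogeneous Neumann boundary condition ∂w/∂n = 0 on ∂Ω. Let w* > 0 be a constant and u*, v* constants with μw* = νu* + λv*. Then ∫_Ω |∇w|²/w² ≤ (1/w*) ∫_Ω (1/w)[ max{0, -μ + ν/2 + λ/2}(w - w*)² + (ν/2)(u - u*)² + (λ/2)(v - v*)² ]. -/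
/-!
Test the equation against `1 - w*/w`, whose gradient is `(w*/w²) ∇w`: integration by parts turns
`w* ∫ |∇w|²/w²` into `∫ (1 - w*/w)(νu + λv - μw)`. Since `μw* = νu* + λv*`, the integrand
is `(w - w*)(ν(u - u*) + λ(v - v*) - μ(w - w*)) / w`, and Young's inequality on the mixed
products bounds it pointwise by the integrand on the right.
-/

open MeasureTheory
open scoped RealInnerProductSpace

/-- The Laplacian of a function on Euclidean space. -/
noncomputable def lap {N : ℕ} (w : EuclideanSpace ℝ (Fin N) → ℝ)
    (x : EuclideanSpace ℝ (Fin N)) : ℝ :=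
  ∑ i : Fin N,
    fderiv ℝ (fun y => fderiv ℝ w y (EuclideanSpace.single i 1)) x
      (EuclideanSpace.single i 1)

lemma mul_young_le (μ ν lam a p q : ℝ) (hν : 0 ≤ ν) (hlam : 0 ≤ lam) :
    a * (ν * p + lam * q - μ * a) ≤
      max 0 (-μ + ν / 2 + lam / 2) * a ^ 2 + ν / 2 * p ^ 2 + lam / 2 * q ^ 2 := by
  have hap : a * p ≤ (a ^ 2 + p ^ 2) / 2 := by nlinarith [sq_nonneg (a - p)]
  have haq : a * q ≤ (a ^ 2 + q ^ 2) / 2 := by nlinarith [sq_nonneg (a - q)]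
  have hmax : (-μ + ν / 2 + lam / 2) * a ^ 2 ≤ max 0 (-μ + ν / 2 + lam / 2) * a ^ 2 :=
    mul_le_mul_of_nonneg_right (le_max_right _ _) (sq_nonneg a)
  nlinarith [mul_le_mul_of_nonneg_left hap hν, mul_le_mul_of_nonneg_left haq hlam]

lemma one_sub_div_mul_le {μ ν lam u v w ustar vstar wstar : ℝ} (hν : 0 ≤ ν) (hlam : 0 ≤ lam)
    (hw : 0 < w) (hstar : μ * wstar = ν * ustar + lam * vstar) :
    (1 - wstar / w) * (ν * u + lam * v - μ * w) ≤
      (1 / w) * (max 0 (-μ + ν / 2 + lam / 2) * (w - wstar) ^ 2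
        + (ν / 2) * (u - ustar) ^ 2 + (lam / 2) * (v - vstar) ^ 2) := by
  have hrewrite : (1 - wstar / w) * (ν * u + lam * v - μ * w) =
      (1 / w) * ((w - wstar) * (ν * (u - ustar) + lam * (v - vstar) - μ * (w - wstar))) := by
    field_simp
    linear_combination (wstar - w) * hstar
  rw [hrewrite]
  exact mul_le_mul_of_nonneg_left (mul_young_le _ _ _ _ _ _ hν hlam) (by positivity)

section Gradient

variable {F : Type*} [NormedAddCommGroup F] [InnerProductSpace ℝ F] [CompleteSpace F]

lemma HasDerivAt.hasGradientAt_comp {g : ℝ → ℝ} {g' : ℝ} {f : F → ℝ} {x : F}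
    (hg : HasDerivAt g g' (f x)) (hf : DifferentiableAt ℝ f x) :
    HasGradientAt (g ∘ f) (g' • gradient f x) x := by
  rw [hasGradientAt_iff_hasFDerivAt, map_smul, toDual_gradient]
  exact hg.comp_hasFDerivAt x hf.hasFDerivAt

lemma gradient_one_sub_const_div {w : F → ℝ} {x : F} (c : ℝ)
    (hw : DifferentiableAt ℝ w x) (hx : w x ≠ 0) :
    gradient (fun y => 1 - c / w y) x = (c / w x ^ 2) • gradient w x := by
  have hderiv : HasDerivAt (fun t : ℝ => 1 - c / t) (c / w x ^ 2) (w x) := by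
    refine ((hasDerivAt_const (w x) (1 : ℝ)).sub
      ((hasDerivAt_const _ c).div (hasDerivAt_id _) hx)).congr_deriv ?_
    simp [neg_div]
  exact (hderiv.hasGradientAt_comp hw).gradient

end Gradient

lemma ContinuousOn.integrableOn_of_isBounded {X E : Type*} [MetricSpace X] [ProperSpace X]
    [MeasurableSpace X] [OpensMeasurableSpace X] {μ : Measure X} [IsFiniteMeasureOnCompacts μ]
    [NormedAddCommGroup E] {f : X → E} {s : Set X}
    (hs : Bornology.IsBounded s) (hf : ContinuousOn f (closure s)) : IntegrableOn f s μ :=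
  (hf.integrableOn_compact (Metric.isCompact_of_isClosed_isBounded isClosed_closure hs.closure)
    ).mono_set subset_closure

lemma const_mul_setIntegral_gradient_div_sq_eq {N : ℕ} {Ω : Set (EuclideanSpace ℝ (Fin N))}
    (hopen : IsOpen Ω) {w s : EuclideanSpace ℝ (Fin N) → ℝ} (c : ℝ)
    (hw : DifferentiableOn ℝ w Ω) (hwne : ∀ x ∈ Ω, w x ≠ 0)
    (hlap : ∀ x ∈ Ω, lap w x = -s x)
    (hibp : ∫ x in Ω, (1 - c / w x) * lap w x =
      -∫ x in Ω, ⟪gradient (fun y => 1 - c / w y) x, gradient w x⟫) :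
    c * ∫ x in Ω, ‖gradient w x‖ ^ 2 / w x ^ 2 = ∫ x in Ω, (1 - c / w x) * s x := by
  have hinner : ∀ x ∈ Ω, ⟪gradient (fun y => 1 - c / w y) x, gradient w x⟫ =
      c * (‖gradient w x‖ ^ 2 / w x ^ 2) := by
    intro x hx
    rw [gradient_one_sub_const_div c (hw.differentiableAt (hopen.mem_nhds hx)) (hwne x hx),
      real_inner_smul_left, real_inner_self_eq_norm_sq]
    ring
  have hlap' : ∀ x ∈ Ω, (1 - c / w x) * lap w x = -((1 - c / w x) * s x) := by
    intro x hx
    rw [hlap x hx, mul_neg]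
  rw [setIntegral_congr_fun hopen.measurableSet hinner, setIntegral_congr_fun hopen.measurableSet
    hlap', integral_neg, integral_const_mul, neg_inj] at hibp
  exact hibp.symm

theorem stmt_11_general {N : ℕ} (Ω : Set (EuclideanSpace ℝ (Fin N)))
    (hopen : IsOpen Ω) (hbdd : Bornology.IsBounded Ω)
    (μ ν lam : ℝ) (hν : 0 < ν) (hlam : 0 < lam)
    (u v w : EuclideanSpace ℝ (Fin N) → ℝ)
    (hu : ContDiffOn ℝ 2 u (closure Ω)) (hv : ContDiffOn ℝ 2 v (closure Ω))
    (hw : ContDiffOn ℝ 2 w (closure Ω))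
    (hwpos : ∀ x ∈ closure Ω, 0 < w x)
    (hpde : ∀ x ∈ Ω, lap w x - μ * w x + ν * u x + lam * v x = 0)
    -- integration by parts against ∇w: valid since Ω is a smooth domain and
    -- w satisfies the homogeneous Neumann boundary condition ∂w/∂n = 0 on ∂Ω
    (hibp : ∀ f : EuclideanSpace ℝ (Fin N) → ℝ, ContDiffOn ℝ 1 f (closure Ω) →
      ∫ x in Ω, f x * lap w x = -∫ x in Ω, ⟪gradient f x, gradient w x⟫)
    (ustar vstar wstar : ℝ) (hwstar : 0 < wstar)
    (hstar : μ * wstar = ν * ustar + lam * vstar) :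
    ∫ x in Ω, ‖gradient w x‖ ^ 2 / (w x) ^ 2 ≤
      (1 / wstar) * ∫ x in Ω, (1 / w x) *
        (max 0 (-μ + ν / 2 + lam / 2) * (w x - wstar) ^ 2
          + (ν / 2) * (u x - ustar) ^ 2 + (lam / 2) * (v x - vstar) ^ 2) := by
  have hwne : ∀ x ∈ closure Ω, w x ≠ 0 := fun x hx => (hwpos x hx).ne'
  have hwc := hw.continuousOn
  have huc := hu.continuousOn
  have hvc := hv.continuousOn
  have hidentity := const_mul_setIntegral_gradient_div_sq_eq
    (s := fun x => ν * u x + lam * v x - μ * w x)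
    hopen wstar ((hw.differentiableOn (by norm_num)).mono subset_closure)
    (fun x hx => hwne x (subset_closure hx)) (fun x hx => by linarith [hpde x hx])
    (hibp _ (contDiffOn_const.sub (contDiffOn_const.div (hw.of_le (by norm_num)) hwne)))
  have hpointwise : ∀ x ∈ Ω, (1 - wstar / w x) * (ν * u x + lam * v x - μ * w x) ≤
      (1 / w x) * (max 0 (-μ + ν / 2 + lam / 2) * (w x - wstar) ^ 2
        + (ν / 2) * (u x - ustar) ^ 2 + (lam / 2) * (v x - vstar) ^ 2) := fun x hx =>
    one_sub_div_mul_le hν.le hlam.le (hwpos x (subset_closure hx)) hstar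
  have hle := setIntegral_mono_on
    (ContinuousOn.integrableOn_of_isBounded (μ := volume) hbdd (by fun_prop (disch := assumption)))
    (ContinuousOn.integrableOn_of_isBounded (μ := volume) hbdd (by fun_prop (disch := assumption)))
    hopen.measurableSet hpointwise
  rw [one_div_mul_eq_div, le_div_iff₀ hwstar]
  linarith

theorem stmt_11 {N : ℕ} (Ω : Set (EuclideanSpace ℝ (Fin N)))
    (hopen : IsOpen Ω) (hbdd : Bornology.IsBounded Ω)
    (μ ν lam : ℝ) (hμ : 0 < μ) (hν : 0 < ν) (hlam : 0 < lam)
    (u v w : EuclideanSpace ℝ (Fin N) → ℝ)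
    (hu : ContDiffOn ℝ 2 u (closure Ω)) (hv : ContDiffOn ℝ 2 v (closure Ω))
    (hw : ContDiffOn ℝ 2 w (closure Ω))
    (hwpos : ∀ x ∈ closure Ω, 0 < w x)
    (hpde : ∀ x ∈ Ω, lap w x - μ * w x + ν * u x + lam * v x = 0)
    -- integration by parts against ∇w: valid since Ω is a smooth domain and
    -- w satisfies the homogeneous Neumann boundary condition ∂w/∂n = 0 on ∂Ω
    (hibp : ∀ f : EuclideanSpace ℝ (Fin N) → ℝ, ContDiffOn ℝ 1 f (closure Ω) →
      ∫ x in Ω, f x * lap w x = -∫ x in Ω, ⟪gradient f x, gradient w x⟫)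
    (ustar vstar wstar : ℝ) (hwstar : 0 < wstar)
    (hstar : μ * wstar = ν * ustar + lam * vstar) :
    ∫ x in Ω, ‖gradient w x‖ ^ 2 / (w x) ^ 2 ≤
      (1 / wstar) * ∫ x in Ω, (1 / w x) *
        (max 0 (-μ + ν / 2 + lam / 2) * (w x - wstar) ^ 2
          + (ν / 2) * (u x - ustar) ^ 2 + (lam / 2) * (v x - vstar) ^ 2) :=
  stmt_11_general Ω hopen hbdd μ ν lam hν hlam u v w hu hv hw hwpos hpde hibp ustar vstar wstar
    hwstar hstar
end
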